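/- Let R be a reduced simply laced extended affine root system of rank ℓ > 1 and nullity ν, and let Π be a reflectable base for R. Then Π contains a subset Π' of cardinality ℓ + ν such that, setting R' = W_{Π'}·Π' ∪ ((W_{Π'}·Π' − W_{Π'}·Π') ∩ R⁰), the set R' is a simply laced extended affine root system in span_ℝ R' (with the restricted form) of rank ℓ and nullity ν with R'^× ⊆ R^×, and Π' is a reflectable base for R'. -/

import Mathlib

open Pointwise
open scoped Classical

noncomputable section

namespace EARSPaper

variable {V : Type*} [AddCommGroup V] [Module ℝ V]

/-- The reflection based on `a`: `x ↦ x - (2 B(x,a)/B(a,a)) • a`.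
By the division-by-zero convention this is the identity map when `B a a = 0`. -/
def reflMap (B : LinearMap.BilinForm ℝ V) (a : V) : V →ₗ[ℝ] V :=
  LinearMap.id - ((2 / B a a) • B.flip a).smulRight a

theorem reflMap_apply (B : LinearMap.BilinForm ℝ V) (a x : V) :
    reflMap B a x = x - (2 / B a a * B x a) • a := by
  simp [reflMap, LinearMap.smulRight_apply, LinearMap.smul_apply, smul_eq_mul]

theorem reflMap_invol (B : LinearMap.BilinForm ℝ V) (a x : V) :
    reflMap B a (reflMap B a x) = x := by
  rcases eq_or_ne (B a a) 0 with h | h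
  · simp [reflMap_apply, h]
  · rw [reflMap_apply, reflMap_apply]
    rw [map_sub, map_smul, LinearMap.sub_apply, LinearMap.smul_apply, smul_eq_mul]
    have hs : 2 / B a a * (B x a - 2 / B a a * B x a * B a a) = -(2 / B a a * B x a) := by
      field_simp
      ring
    rw [hs, neg_smul, sub_neg_eq_add, sub_add_cancel]

/-- The reflection based on `a` as a linear automorphism of `V`. -/
def reflEquiv (B : LinearMap.BilinForm ℝ V) (a : V) : V ≃ₗ[ℝ] V :=
  LinearEquiv.ofLinear (reflMap B a) (reflMap B a)
    (LinearMap.ext fun x => reflMap_invol B a x)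
    (LinearMap.ext fun x => reflMap_invol B a x)

@[simp] theorem reflEquiv_apply (B : LinearMap.BilinForm ℝ V) (a x : V) :
    reflEquiv B a x = reflMap B a x := rfl

/-- The set of nonisotropic elements of `R`. -/
def nonIso (B : LinearMap.BilinForm ℝ V) (R : Set V) : Set V := {a ∈ R | B a a ≠ 0}

/-- Connectedness of a set with respect to the form. -/
def IsConnSet (B : LinearMap.BilinForm ℝ V) (P : Set V) : Prop :=
  ¬ ∃ P₁ P₂ : Set V, P₁.Nonempty ∧ P₂.Nonempty ∧ P₁ ∪ P₂ = P ∧ P₁ ∩ P₂ = ∅ ∧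
      ∀ a ∈ P₁, ∀ b ∈ P₂, B a b = 0

/-- Extended affine root system (axioms (R1)-(R6), for a positive semidefinite
symmetric bilinear form). -/
structure IsEARS (B : LinearMap.BilinForm ℝ V) (R : Set V) : Prop where
  symm : ∀ x y : V, B x y = B y x
  posSemidef : ∀ x : V, 0 ≤ B x x
  lattice : ∃ s : Set V, LinearIndependent ℝ ((↑) : s → V) ∧
      Submodule.span ℝ s = ⊤ ∧ AddSubgroup.closure R = AddSubgroup.closure s
  integrality : ∀ a ∈ nonIso B R, ∀ b ∈ nonIso B R, ∃ n : ℤ, 2 * B b a / B a a = (n : ℝ)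
  reflInvariant : ∀ a ∈ nonIso B R, ∀ b ∈ R, reflMap B a b ∈ R
  isoEq : R ∩ (LinearMap.ker B : Set V) =
      (LinearMap.ker B : Set V) ∩ (nonIso B R - nonIso B R)
  notTwice : ∀ a ∈ nonIso B R, (2 : ℝ) • a ∉ R
  conn : IsConnSet B (nonIso B R)

/-- `R` is reduced: no `α, β ∈ R^×` with `α - 2β ∈ V⁰`. -/
def IsReduced (B : LinearMap.BilinForm ℝ V) (R : Set V) : Prop :=
  ¬ ∃ a ∈ nonIso B R, ∃ b ∈ nonIso B R, a - (2 : ℝ) • b ∈ LinearMap.ker B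

/-- `R` is simply laced: the form takes a single value on `R^×`. -/
def IsSimplyLaced (B : LinearMap.BilinForm ℝ V) (R : Set V) : Prop :=
  ∀ a ∈ nonIso B R, ∀ b ∈ nonIso B R, B a a = B b b

/-- The nullity: the dimension of the radical of the form. -/
def nullity (B : LinearMap.BilinForm ℝ V) : ℕ := Module.finrank ℝ ↥(LinearMap.ker B)

/-- The rank: `dim V - nullity`. -/
def rank (B : LinearMap.BilinForm ℝ V) : ℕ := Module.finrank ℝ V - nullity B

/-- The group generated by the reflections `w_a`, `a ∈ P`, acting on `V`. -/
def weylOn (B : LinearMap.BilinForm ℝ V) (P : Set V) : Subgroup (V ≃ₗ[ℝ] V) :=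
  Subgroup.closure (reflEquiv B '' P)

/-- The set `W_P ⬝ P = {w a : w ∈ W_P, a ∈ P}`. -/
def reflOrbit (B : LinearMap.BilinForm ℝ V) (P : Set V) : Set V :=
  {x | ∃ w ∈ weylOn B P, ∃ a ∈ P, w a = x}

/-- `P` is a reflectable set for `R`: `P ⊆ R^×` and `W_P ⬝ P = R^×`. -/
def IsReflSet (B : LinearMap.BilinForm ℝ V) (R P : Set V) : Prop :=
  P ⊆ nonIso B R ∧ reflOrbit B P = nonIso B R

/-- `P` is a reflectable base for `R`. -/
def IsReflBase (B : LinearMap.BilinForm ℝ V) (R P : Set V) : Prop :=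
  IsReflSet B R P ∧ ∀ Q ⊆ P, Q ≠ P → ¬ IsReflSet B R Q

/-- The space `Ṽ = V ⊕ (V⁰)*`. -/
abbrev VT (B : LinearMap.BilinForm ℝ V) : Type _ := V × Module.Dual ℝ ↥(LinearMap.ker B)

/-- The projection of `V` onto the radical `V⁰` along the fixed complement `V̇`. -/
def projRad (B : LinearMap.BilinForm ℝ V) (Vdot : Submodule ℝ V)
    (hc : IsCompl (LinearMap.ker B) Vdot) : V →ₗ[ℝ] ↥(LinearMap.ker B) :=
  (LinearMap.ker B).linearProjOfIsCompl Vdot hc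

/-- The extension of the form `B` to a nondegenerate symmetric bilinear form on
`Ṽ = V ⊕ (V⁰)*`. -/
def formT (B : LinearMap.BilinForm ℝ V) (Vdot : Submodule ℝ V)
    (hc : IsCompl (LinearMap.ker B) Vdot) : LinearMap.BilinForm ℝ (VT B) :=
  LinearMap.mk₂ ℝ
    (fun x y => B x.1 y.1 + y.2 (projRad B Vdot hc x.1) + x.2 (projRad B Vdot hc y.1))
    (fun x x' y => by
      simp only [Prod.fst_add, Prod.snd_add, map_add, LinearMap.add_apply]; ring)
    (fun c x y => by
      simp only [Prod.smul_fst, Prod.smul_snd, map_smul, LinearMap.smul_apply,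
        smul_eq_mul]; ring)
    (fun x y y' => by
      simp only [Prod.fst_add, Prod.snd_add, map_add, LinearMap.add_apply]; ring)
    (fun c x y => by
      simp only [Prod.smul_fst, Prod.smul_snd, map_smul, LinearMap.smul_apply,
        smul_eq_mul]; ring)

/-- The subgroup of `GL(Ṽ)` generated by the reflections based on `(a, 0)`, `a ∈ P`.
For `P = R^×` this is the extended affine Weyl group `W` of `R`. -/
def weylTilde (B : LinearMap.BilinForm ℝ V) (Vdot : Submodule ℝ V)
    (hc : IsCompl (LinearMap.ker B) Vdot) (P : Set V) :
    Subgroup ((VT B) ≃ₗ[ℝ] (VT B)) :=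
  Subgroup.closure ((fun a => reflEquiv (formT B Vdot hc) (a, 0)) '' P)

theorem reflT_mem_weylTilde (B : LinearMap.BilinForm ℝ V) (Vdot : Submodule ℝ V)
    (hc : IsCompl (LinearMap.ker B) Vdot) {P : Set V} {a : V} (ha : a ∈ P) :
    reflEquiv (formT B Vdot hc) (a, 0) ∈ weylTilde B Vdot hc P :=
  Subgroup.subset_closure ⟨a, ha, rfl⟩

/-- The orbit of `a ∈ V ⊆ Ṽ` under the group generated by the reflections based
on the elements of `G`. -/
def orbitT (B : LinearMap.BilinForm ℝ V) (Vdot : Submodule ℝ V)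
    (hc : IsCompl (LinearMap.ker B) Vdot) (G : Set V) (a : V) : Set V :=
  {x | ∃ w ∈ weylTilde B Vdot hc G, w (a, 0) = (x, 0)}

/-- The set `W_G ⬝ P` computed inside `Ṽ`. -/
def dotSetT (B : LinearMap.BilinForm ℝ V) (Vdot : Submodule ℝ V)
    (hc : IsCompl (LinearMap.ker B) Vdot) (G P : Set V) : Set V :=
  {x | ∃ w ∈ weylTilde B Vdot hc G, ∃ a ∈ P, w (a, 0) = (x, 0)}

/-- `R` is a minimal extended affine root system: for every `α ∈ R^×`,
`W_{R^× ∖ Wα}` is a proper subgroup of `W`. -/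
def IsMinimalEARS (B : LinearMap.BilinForm ℝ V) (Vdot : Submodule ℝ V)
    (hc : IsCompl (LinearMap.ker B) Vdot) (R : Set V) : Prop :=
  ∀ a ∈ nonIso B R,
    weylTilde B Vdot hc (nonIso B R \ orbitT B Vdot hc (nonIso B R) a)
      < weylTilde B Vdot hc (nonIso B R)

/-- The defining relators of the conjugation presented group `Ŵ`:
`ŵ_α² = 1` and `ŵ_α ŵ_β ŵ_α = ŵ_{w_α(β)}`, for `α, β ∈ R^×`. -/
def conjRels (B : LinearMap.BilinForm ℝ V) (R : Set V) :
    Set (FreeGroup ↥(nonIso B R)) :=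
  {r | (∃ a : ↥(nonIso B R), r = FreeGroup.of a * FreeGroup.of a) ∨
      (∃ a b c : ↥(nonIso B R), (c : V) = reflMap B (a : V) (b : V) ∧
        r = FreeGroup.of a * FreeGroup.of b * FreeGroup.of a * (FreeGroup.of c)⁻¹)}

/-- The conjugation presented group `Ŵ` associated with `R`. -/
abbrev WHat (B : LinearMap.BilinForm ℝ V) (R : Set V) := PresentedGroup (conjRels B R)

/-- The generator `ŵ_α` of `Ŵ`. -/
def wHat (B : LinearMap.BilinForm ℝ V) (R : Set V) (a : ↥(nonIso B R)) : WHat B R :=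
  PresentedGroup.of a

/-- `W` has the presentation by conjugation: the canonical epimorphism
`ψ : Ŵ → W`, `ŵ_α ↦ w_α` is an isomorphism. -/
def HasPresByConj (B : LinearMap.BilinForm ℝ V) (Vdot : Submodule ℝ V)
    (hc : IsCompl (LinearMap.ker B) Vdot) (R : Set V) : Prop :=
  ∃ ψ : WHat B R →* ↥(weylTilde B Vdot hc (nonIso B R)),
    (∀ a : ↥(nonIso B R),
      ((ψ (wHat B R a) : (VT B) ≃ₗ[ℝ] (VT B))) =
        reflEquiv (formT B Vdot hc) ((a : V), 0)) ∧
    Function.Bijective ψ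

/-- The restriction of the form to a subspace. -/
def restrictForm (B : LinearMap.BilinForm ℝ V) (U : Submodule ℝ V) :
    LinearMap.BilinForm ℝ ↥U := B.compl₁₂ U.subtype U.subtype

/-- The root system `R_P = R_P^n ∪ R_P^i` associated with a subset `P ⊆ R^×`,
where `R_P^n = W_P ⬝ P` and `R_P^i = (R_P^n - R_P^n) ∩ R⁰`. -/
def earsOf (B : LinearMap.BilinForm ℝ V) (R P : Set V) : Set V :=
  reflOrbit B P ∪
    ((reflOrbit B P - reflOrbit B P) ∩ (R ∩ (LinearMap.ker B : Set V)))

/-- The subgroup `2⟨R⟩` of `⟨R⟩`. -/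
def twoLat (R : Set V) : AddSubgroup V :=
  AddSubgroup.map (AddMonoidHom.mk' (fun x : V => x + x) (fun a b => by abel))
    (AddSubgroup.closure R)



/-! ### Auxiliary lemmas -/

section AuxBasic

variable (B : LinearMap.BilinForm ℝ V)

theorem reflMap_isometry (hsymm : ∀ x y : V, B x y = B y x) (a x y : V) :
    B (reflMap B a x) (reflMap B a y) = B x y := by
  rcases eq_or_ne (B a a) 0 with h | h
  · simp [reflMap_apply, h]
  · simp only [reflMap_apply, map_sub, map_smul, LinearMap.sub_apply, LinearMap.smul_apply,
      smul_eq_mul]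
    rw [hsymm a y]
    field_simp
    ring

theorem mem_ker_of_isotropic (hsymm : ∀ x y : V, B x y = B y x)
    (hpos : ∀ x : V, 0 ≤ B x x) {x : V} (hx : B x x = 0) :
    x ∈ LinearMap.ker B := by
  rw [LinearMap.mem_ker]
  apply LinearMap.ext
  intro y
  rw [LinearMap.zero_apply]
  by_contra hxy
  set t : ℝ := -(B y y + 1) / (2 * B x y) with ht
  have h0 := hpos (t • x + y)
  have hexp : B (t • x + y) (t • x + y) = 2 * t * B x y + B y y := by
    simp only [map_add, map_smul, LinearMap.add_apply, LinearMap.smul_apply, smul_eq_mul]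
    rw [hx, hsymm y x]
    ring
  have hval : 2 * t * B x y = -(B y y + 1) := by
    rw [ht]
    field_simp
  rw [hexp, hval] at h0
  linarith

theorem reflEquiv_inv (a : V) : (reflEquiv B a)⁻¹ = reflEquiv B a := rfl

theorem weylOn_isometry (hsymm : ∀ x y : V, B x y = B y x) {P : Set V}
    {w : V ≃ₗ[ℝ] V} (hw : w ∈ weylOn B P) : ∀ x y : V, B (w x) (w y) = B x y := by
  refine Subgroup.closure_induction
    (p := fun w _ => ∀ x y : V, B (w x) (w y) = B x y) ?_ ?_ ?_ ?_ hw
  · rintro g ⟨a, _, rfl⟩ x y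
    exact reflMap_isometry B hsymm a x y
  · intro x y; rfl
  · intro u v _ _ ihu ihv x y
    exact (ihu (v x) (v y)).trans (ihv x y)
  · intro u _ ih x y
    have h1 : u (u⁻¹ x) = x := u.apply_symm_apply x
    have h2 : u (u⁻¹ y) = y := u.apply_symm_apply y
    conv_rhs => rw [← h1, ← h2]
    exact (ih _ _).symm

theorem weylOn_mem_of_reflStable {P S : Set V}
    (hS : ∀ a ∈ P, ∀ x ∈ S, reflMap B a x ∈ S)
    {w : V ≃ₗ[ℝ] V} (hw : w ∈ weylOn B P) :
    ∀ x ∈ S, w x ∈ S ∧ w⁻¹ x ∈ S := by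
  refine Subgroup.closure_induction
    (p := fun w _ => ∀ x ∈ S, w x ∈ S ∧ w⁻¹ x ∈ S) ?_ ?_ ?_ ?_ hw
  · rintro g ⟨a, ha, rfl⟩ x hx
    exact ⟨hS a ha x hx, by rw [reflEquiv_inv]; exact hS a ha x hx⟩
  · intro x hx; exact ⟨hx, by simpa using hx⟩
  · intro u v _ _ ihu ihv x hx
    refine ⟨(ihu (v x) ((ihv x hx).1)).1, ?_⟩
    have hrw : (u * v)⁻¹ x = v⁻¹ (u⁻¹ x) := by rw [mul_inv_rev]; rfl
    rw [hrw]
    exact (ihv _ ((ihu x hx).2)).2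
  · intro u _ ih x hx
    exact ⟨(ih x hx).2, by rw [inv_inv]; exact (ih x hx).1⟩

theorem weylOn_mem_R (R : Set V) (hR : IsEARS B R) {P : Set V} (hP : P ⊆ nonIso B R)
    {w : V ≃ₗ[ℝ] V} (hw : w ∈ weylOn B P) {x : V} (hx : x ∈ R) : w x ∈ R :=
  (weylOn_mem_of_reflStable B
    (fun a ha y hy => hR.reflInvariant a (hP ha) y hy) hw x hx).1

theorem weylOn_mem_span {P : Set V} {w : V ≃ₗ[ℝ] V} (hw : w ∈ weylOn B P)
    {x : V} (hx : x ∈ Submodule.span ℝ P) : w x ∈ Submodule.span ℝ P :=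
  (weylOn_mem_of_reflStable B (S := (Submodule.span ℝ P : Set V))
    (fun a ha y hy => by
      rw [reflMap_apply]
      exact Submodule.sub_mem _ hy
        (Submodule.smul_mem _ _ (Submodule.subset_span ha))) hw x hx).1

theorem mem_reflOrbit_self {P : Set V} {a : V} (ha : a ∈ P) : a ∈ reflOrbit B P :=
  ⟨1, one_mem _, a, ha, rfl⟩

theorem reflOrbit_subset_span {P : Set V} :
    reflOrbit B P ⊆ (Submodule.span ℝ P : Set V) := by
  rintro x ⟨w, hw, a, ha, rfl⟩
  exact weylOn_mem_span B hw (Submodule.subset_span ha)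

theorem reflOrbit_subset_nonIso (R : Set V) (hR : IsEARS B R) {P : Set V}
    (hP : P ⊆ nonIso B R) : reflOrbit B P ⊆ nonIso B R := by
  rintro x ⟨w, hw, a, ha, rfl⟩
  refine ⟨weylOn_mem_R B R hR hP hw (hP ha).1, ?_⟩
  rw [weylOn_isometry B hR.symm hw a a]
  exact (hP ha).2

theorem reflEquiv_conj (hsymm : ∀ x y : V, B x y = B y x) {w : V ≃ₗ[ℝ] V}
    (hw : ∀ x y : V, B (w x) (w y) = B x y) (c : V) :
    reflEquiv B (w c) = w * reflEquiv B c * w⁻¹ := by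
  apply LinearEquiv.ext
  intro x
  show reflMap B (w c) x = w (reflMap B c (w⁻¹ x))
  have h1 : w (w⁻¹ x) = x := w.apply_symm_apply x
  have h2 : B (w c) (w c) = B c c := hw c c
  have h3 : B x (w c) = B (w⁻¹ x) c := by
    conv_lhs => rw [← h1]
    exact hw _ _
  rw [reflMap_apply, reflMap_apply, map_sub, map_smul, h1, h2, h3]

theorem reflEquiv_mem_weylOn_of_mem_reflOrbit (hsymm : ∀ x y : V, B x y = B y x)
    {P : Set V} {a : V} (ha : a ∈ reflOrbit B P) :
    reflEquiv B a ∈ weylOn B P := by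
  obtain ⟨w, hw, c, hc, rfl⟩ := ha
  rw [reflEquiv_conj B hsymm (weylOn_isometry B hsymm hw) c]
  exact mul_mem (mul_mem hw (Subgroup.subset_closure ⟨c, hc, rfl⟩)) (inv_mem hw)

theorem reflOrbit_reflClosed (hsymm : ∀ x y : V, B x y = B y x) {P : Set V} {a b : V}
    (ha : a ∈ reflOrbit B P) (hb : b ∈ reflOrbit B P) :
    reflMap B a b ∈ reflOrbit B P := by
  obtain ⟨w', hw', d, hd, rfl⟩ := hb
  exact ⟨reflEquiv B a * w',
    mul_mem (reflEquiv_mem_weylOn_of_mem_reflOrbit B hsymm ha) hw', d, hd, rfl⟩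

theorem reflOrbit_subset_goodLattice (R : Set V) (hR : IsEARS B R) {P : Set V}
    (hP : P ⊆ nonIso B R) :
    reflOrbit B P ⊆ {x | x ∈ AddSubgroup.closure P ∧
      ∀ c ∈ nonIso B R, ∃ n : ℤ, 2 * B x c / B c c = (n : ℝ)} := by
  set L : Set V := {x | x ∈ AddSubgroup.closure P ∧
      ∀ c ∈ nonIso B R, ∃ n : ℤ, 2 * B x c / B c c = (n : ℝ)} with hL
  have hstab : ∀ a ∈ P, ∀ x ∈ L, reflMap B a x ∈ L := by
    intro a ha x hx
    obtain ⟨n, hn⟩ := hx.2 a (hP ha)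
    have hscal : 2 / B a a * B x a = (n : ℝ) := by rw [← hn]; ring
    have key : reflMap B a x = x - (n : ℝ) • a := by rw [reflMap_apply, hscal]
    constructor
    · rw [key, Int.cast_smul_eq_zsmul ℝ]
      exact sub_mem hx.1 (AddSubgroup.zsmul_mem _ (AddSubgroup.subset_closure ha) n)
    · intro c hc
      obtain ⟨m, hm⟩ := hx.2 c hc
      obtain ⟨k, hk⟩ := hR.integrality c hc a (hP ha)
      refine ⟨m - n * k, ?_⟩
      have hBcc : B c c ≠ 0 := hc.2
      have expand : B (x - (n : ℝ) • a) c = B x c - (n : ℝ) * B a c := by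
        simp [map_sub, map_smul, LinearMap.sub_apply, LinearMap.smul_apply, smul_eq_mul]
      have hsplit : 2 * (B x c - (n : ℝ) * B a c) / B c c
          = 2 * B x c / B c c - (n : ℝ) * (2 * B a c / B c c) := by
        field_simp
      rw [key, expand, hsplit, hm, hk]
      push_cast
      ring
  rintro x ⟨w, hw, a, ha, rfl⟩
  refine (weylOn_mem_of_reflStable B hstab hw a ⟨AddSubgroup.subset_closure ha, ?_⟩).1
  intro c hc
  exact hR.integrality c hc a (hP ha)

theorem bilin_zero_left_of_span {S : Set V} {x y : V} (hx : x ∈ Submodule.span ℝ S)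
    (h : ∀ s ∈ S, B s y = 0) : B x y = 0 := by
  induction hx using Submodule.span_induction with
  | mem s hs => exact h s hs
  | zero => simp
  | add a b _ _ iha ihb => simp [map_add, LinearMap.add_apply, iha, ihb]
  | smul c a _ ih => simp [map_smul, LinearMap.smul_apply, ih]

theorem bilin_zero_right_of_span {S : Set V} {x y : V} (hy : y ∈ Submodule.span ℝ S)
    (h : ∀ s ∈ S, B x s = 0) : B x y = 0 := by
  induction hy using Submodule.span_induction with
  | mem s hs => exact h s hs
  | zero => simp
  | add a b _ _ iha ihb => simp [map_add, iha, ihb]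
  | smul c a _ ih => simp [map_smul, ih]

end AuxBasic


section AuxConn

variable (B : LinearMap.BilinForm ℝ V)

theorem isConnSet_singleton (x : V) : IsConnSet B {x} := by
  rintro ⟨A, C, ⟨a, ha⟩, ⟨c, hc⟩, hun, hdis, -⟩
  have ha' : a ∈ ({x} : Set V) := hun ▸ Set.mem_union_left C ha
  have hc' : c ∈ ({x} : Set V) := hun ▸ Set.mem_union_right A hc
  have : x ∈ A ∩ C := ⟨ha' ▸ ha, hc' ▸ hc⟩
  rw [hdis] at this
  exact this

theorem isConnSet_insert {P : Set V} {b p : V} (hP : IsConnSet B P) (hp : p ∈ P)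
    (h1 : B p b ≠ 0) (h2 : B b p ≠ 0) : IsConnSet B (insert b P) := by
  rintro ⟨A, C, ⟨a₀, ha₀⟩, ⟨c₀, hc₀⟩, hun, hdis, horth⟩
  have hsub : P ⊆ A ∪ C := by
    intro q hq
    rw [hun]
    exact Set.mem_insert_of_mem b hq
  rcases Set.eq_empty_or_nonempty (P ∩ A) with hPA | hPA
  · -- P ⊆ C, so A ⊆ {b}
    have hnPA : ∀ q, q ∈ P → q ∈ A → False := by
      intro q hq hA
      have : q ∈ P ∩ A := ⟨hq, hA⟩
      rw [hPA] at this
      exact this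
    have hPC : P ⊆ C := by
      intro q hq
      rcases hsub hq with h | h
      · exact absurd h (fun h => hnPA q hq h)
      · exact h
    have hA : a₀ = b := by
      have h' : a₀ ∈ insert b P := by rw [← hun]; exact Set.mem_union_left C ha₀
      rcases Set.mem_insert_iff.mp h' with h | h
      · exact h
      · exact absurd ha₀ (fun hh => hnPA a₀ h hh)
    exact h2 (hA ▸ horth a₀ ha₀ p (hPC hp))
  rcases Set.eq_empty_or_nonempty (P ∩ C) with hPC | hPC
  · have hnPC : ∀ q, q ∈ P → q ∈ C → False := by
      intro q hq hC
      have : q ∈ P ∩ C := ⟨hq, hC⟩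
      rw [hPC] at this
      exact this
    have hPA' : P ⊆ A := by
      intro q hq
      rcases hsub hq with h | h
      · exact h
      · exact absurd h (fun h => hnPC q hq h)
    have hC : c₀ = b := by
      have h' : c₀ ∈ insert b P := by rw [← hun]; exact Set.mem_union_right A hc₀
      rcases Set.mem_insert_iff.mp h' with h | h
      · exact h
      · exact absurd hc₀ (fun hh => hnPC c₀ h hh)
    exact h1 (hC ▸ horth p (hPA' hp) c₀ hc₀)
  · -- both nonempty: contradicts conn of P
    apply hP
    refine ⟨P ∩ A, P ∩ C, hPA, hPC, ?_, ?_, ?_⟩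
    · rw [← Set.inter_union_distrib_left]
      exact Set.inter_eq_left.mpr hsub
    · rw [Set.eq_empty_iff_forall_notMem]
      rintro x ⟨⟨-, hxA⟩, ⟨-, hxC⟩⟩
      rw [Set.eq_empty_iff_forall_notMem] at hdis
      exact hdis x ⟨hxA, hxC⟩
    · rintro x ⟨-, hxA⟩ y ⟨-, hyC⟩
      exact horth x hxA y hyC

theorem exists_conn_basis [FiniteDimensional ℝ V] (hsymm : ∀ x y : V, B x y = B y x)
    {P : Set V} (hconn : IsConnSet B P) (hspan : Submodule.span ℝ P = ⊤)
    {p₀ : V} (hp₀ : p₀ ∈ P) (h0 : p₀ ≠ 0) :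
    ∃ T ⊆ P, (LinearIndependent ℝ ((↑) : T → V)) ∧ Submodule.span ℝ T = ⊤ ∧
      IsConnSet B T := by
  have step : ∀ T : Set V, T ⊆ P → T.Nonempty → Submodule.span ℝ T ≠ ⊤ →
      ∃ b ∈ P, b ∉ Submodule.span ℝ T ∧ ∃ p ∈ T, B p b ≠ 0 := by
    intro T hTP hTne hTspan
    have hCne : (P \ (Submodule.span ℝ T : Set V)).Nonempty := by
      rw [Set.sdiff_nonempty]
      intro h
      exact hTspan (le_antisymm le_top (hspan ▸ Submodule.span_le.mpr h))
    by_contra hno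
    push_neg at hno
    apply hconn
    obtain ⟨t, ht⟩ := hTne
    refine ⟨P ∩ (Submodule.span ℝ T : Set V), P \ (Submodule.span ℝ T : Set V),
      ⟨t, hTP ht, Submodule.subset_span ht⟩, hCne, ?_, ?_, ?_⟩
    · exact Set.inter_union_diff P _
    · rw [Set.eq_empty_iff_forall_notMem]
      rintro x ⟨⟨-, hx1⟩, ⟨-, hx2⟩⟩
      exact hx2 hx1
    · rintro a ⟨-, haspan⟩ b ⟨hbP, hbspan⟩
      refine bilin_zero_left_of_span B haspan ?_
      intro s hs
      exact hno b hbP hbspan s hs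
  have main : ∀ n : ℕ, ∀ T : Set V, T ⊆ P → T.Nonempty →
      LinearIndependent ℝ ((↑) : T → V) → IsConnSet B T →
      Module.finrank ℝ V - Module.finrank ℝ (Submodule.span ℝ T) ≤ n →
      ∃ T', T' ⊆ P ∧ LinearIndependent ℝ ((↑) : T' → V) ∧
        Submodule.span ℝ T' = ⊤ ∧ IsConnSet B T' := by
    intro n
    induction n with
    | zero =>
      intro T hTP hTne hTind hTconn hle
      have h1 : Module.finrank ℝ V ≤ Module.finrank ℝ (Submodule.span ℝ T) :=
        Nat.le_of_sub_eq_zero (Nat.le_zero.mp hle)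
      exact ⟨T, hTP, hTind,
        Submodule.eq_top_of_finrank_eq (le_antisymm (Submodule.finrank_le _) h1), hTconn⟩
    | succ n ih =>
      intro T hTP hTne hTind hTconn hle
      by_cases hT : Submodule.span ℝ T = ⊤
      · exact ⟨T, hTP, hTind, hT, hTconn⟩
      · obtain ⟨b, hbP, hbs, p, hpT, hpb⟩ := step T hTP hTne hT
        have hbp : B b p ≠ 0 := fun h => hpb (by rw [hsymm p b]; exact h)
        have hind' := LinearIndepOn.id_insert hTind hbs
        have hconn' := isConnSet_insert B hTconn hpT hpb hbp
        have hspanlt : Submodule.span ℝ T < Submodule.span ℝ (insert b T) :=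
          lt_of_le_of_ne (Submodule.span_mono (Set.subset_insert b T))
            (fun h => hbs (h ▸ Submodule.subset_span (Set.mem_insert b T)))
        have hlt := Submodule.finrank_lt_finrank_of_lt hspanlt
        refine ih (insert b T) (Set.insert_subset hbP hTP) (Set.insert_nonempty b T)
          hind' hconn' ?_
        omega
  obtain ⟨T, hTP, h1, h2, h3⟩ := main (Module.finrank ℝ V) {p₀}
    (Set.singleton_subset_iff.2 hp₀) ⟨p₀, rfl⟩ ((linearIndepOn_singleton_iff (R := ℝ) (v := (id : V → V))).2 h0)
    (isConnSet_singleton B p₀) (Nat.sub_le _ _)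
  exact ⟨T, hTP, h1, h2, h3⟩

theorem connSet_of_reflBase (R : Set V) (hR : IsEARS B R) {P : Set V}
    (hP : P ⊆ nonIso B R) (horb : reflOrbit B P = nonIso B R) : IsConnSet B P := by
  rintro ⟨A, C, ⟨a₀, ha₀⟩, ⟨c₀, hc₀⟩, hun, hdis, horth⟩
  apply hR.conn
  have horthAC : ∀ u ∈ (Submodule.span ℝ A : Set V), ∀ v ∈ (Submodule.span ℝ C : Set V),
      B u v = 0 := by
    intro u hu v hv
    refine bilin_zero_left_of_span B hu ?_
    intro s hs
    exact bilin_zero_right_of_span B hv (fun c hc => horth s hs c hc)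
  have hstabA : ∀ q ∈ P, ∀ u ∈ (Submodule.span ℝ A : Set V),
      reflMap B q u ∈ (Submodule.span ℝ A : Set V) := by
    intro q hq u hu
    rcases (hun ▸ hq : q ∈ A ∪ C) with h | h
    · rw [reflMap_apply]
      exact Submodule.sub_mem _ hu (Submodule.smul_mem _ _ (Submodule.subset_span h))
    · have : B u q = 0 := horthAC u hu q (Submodule.subset_span h)
      rw [reflMap_apply, this]
      simpa using hu
  have hstabC : ∀ q ∈ P, ∀ u ∈ (Submodule.span ℝ C : Set V),
      reflMap B q u ∈ (Submodule.span ℝ C : Set V) := by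
    intro q hq u hu
    rcases (hun ▸ hq : q ∈ A ∪ C) with h | h
    · have : B u q = 0 := by
        rw [hR.symm u q]
        exact bilin_zero_left_of_span B (Submodule.subset_span h)
          (fun s hs => bilin_zero_right_of_span B hu (fun c hc => horth s hs c hc))
      rw [reflMap_apply, this]
      simpa using hu
    · rw [reflMap_apply]
      exact Submodule.sub_mem _ hu (Submodule.smul_mem _ _ (Submodule.subset_span h))
  have ha₀P : a₀ ∈ P := hun ▸ Set.mem_union_left C ha₀
  have hc₀P : c₀ ∈ P := hun ▸ Set.mem_union_right A hc₀
  refine ⟨nonIso B R ∩ (Submodule.span ℝ A : Set V),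
    nonIso B R ∩ (Submodule.span ℝ C : Set V),
    ⟨a₀, hP ha₀P, Submodule.subset_span ha₀⟩,
    ⟨c₀, hP hc₀P, Submodule.subset_span hc₀⟩, ?_, ?_, ?_⟩
  · ext x
    constructor
    · rintro (⟨h, -⟩ | ⟨h, -⟩) <;> exact h
    · intro hx
      have hx' : x ∈ reflOrbit B P := horb ▸ hx
      obtain ⟨w, hw, q, hq, rfl⟩ := hx'
      rcases (hun ▸ hq : q ∈ A ∪ C) with h | h
      · exact Or.inl ⟨hx, (weylOn_mem_of_reflStable B hstabA hw q
          (Submodule.subset_span h)).1⟩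
      · exact Or.inr ⟨hx, (weylOn_mem_of_reflStable B hstabC hw q
          (Submodule.subset_span h)).1⟩
  · rw [Set.eq_empty_iff_forall_notMem]
    rintro x ⟨⟨hx1, hx2⟩, ⟨-, hx3⟩⟩
    exact hx1.2 (horthAC x hx2 x hx3)
  · rintro x ⟨-, hx⟩ y ⟨-, hy⟩
    exact horthAC x hx y hy

end AuxConn


section AuxOrbitConn

variable (B : LinearMap.BilinForm ℝ V)

theorem reflOrbit_conn {P : Set V} (hPconn : IsConnSet B P)
    (hspan : Submodule.span ℝ P = ⊤)
    (hker : ∀ x ∈ reflOrbit B P, B x x ≠ 0) : IsConnSet B (reflOrbit B P) := by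
  rintro ⟨P₁, P₂, ⟨x₁, hx₁⟩, ⟨x₂, hx₂⟩, hun, hdis, horth⟩
  have hsub : P ⊆ P₁ ∪ P₂ := fun q hq => hun ▸ mem_reflOrbit_self B hq
  rcases Set.eq_empty_or_nonempty (P ∩ P₁) with hP1 | hP1
  · -- P ⊆ P₂, x₁ ⊥ everything
    have hPP2 : P ⊆ P₂ := by
      intro q hq
      rcases hsub hq with h | h
      · exfalso
        have : q ∈ P ∩ P₁ := ⟨hq, h⟩
        rw [hP1] at this
        exact this
      · exact h
    have hx₁O : x₁ ∈ reflOrbit B P := hun ▸ Set.mem_union_left P₂ hx₁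
    refine hker x₁ hx₁O ?_
    refine bilin_zero_right_of_span B (x := x₁) (S := P) ?_ ?_
    · rw [hspan]; exact Submodule.mem_top
    · intro s hs
      exact horth x₁ hx₁ s (hPP2 hs)
  rcases Set.eq_empty_or_nonempty (P ∩ P₂) with hP2 | hP2
  · have hPP1 : P ⊆ P₁ := by
      intro q hq
      rcases hsub hq with h | h
      · exact h
      · exfalso
        have : q ∈ P ∩ P₂ := ⟨hq, h⟩
        rw [hP2] at this
        exact this
    have hx₂O : x₂ ∈ reflOrbit B P := hun ▸ Set.mem_union_right P₁ hx₂
    refine hker x₂ hx₂O ?_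
    refine bilin_zero_left_of_span B (y := x₂) (S := P) ?_ ?_
    · rw [hspan]; exact Submodule.mem_top
    · intro s hs
      exact horth s (hPP1 hs) x₂ hx₂
  · apply hPconn
    refine ⟨P ∩ P₁, P ∩ P₂, hP1, hP2, ?_, ?_, ?_⟩
    · rw [← Set.inter_union_distrib_left, hun]
      exact Set.inter_eq_left.mpr (fun q hq => mem_reflOrbit_self B hq)
    · rw [Set.eq_empty_iff_forall_notMem]
      rintro x ⟨⟨-, hxA⟩, ⟨-, hxC⟩⟩
      rw [Set.eq_empty_iff_forall_notMem] at hdis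
      exact hdis x ⟨hxA, hxC⟩
    · rintro x ⟨-, hxA⟩ y ⟨-, hyC⟩
      exact horth x hxA y hyC

end AuxOrbitConn

section AuxTransport

variable {W : Type*} [AddCommGroup W] [Module ℝ W]
variable (B : LinearMap.BilinForm ℝ V) (B' : LinearMap.BilinForm ℝ W)
variable (e : W ≃ₗ[ℝ] V)

theorem mem_ker_iff_of_equiv (hB' : ∀ x y, B' x y = B (e x) (e y)) (x : W) :
    x ∈ LinearMap.ker B' ↔ e x ∈ LinearMap.ker B := by
  rw [LinearMap.mem_ker, LinearMap.mem_ker]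
  constructor
  · intro h
    apply LinearMap.ext
    intro z
    have h1 := LinearMap.congr_fun h (e.symm z)
    rw [LinearMap.zero_apply] at h1 ⊢
    rw [hB'] at h1
    rwa [e.apply_symm_apply] at h1
  · intro h
    apply LinearMap.ext
    intro y
    rw [LinearMap.zero_apply, hB', h, LinearMap.zero_apply]

theorem nonIso_of_equiv (hB' : ∀ x y, B' x y = B (e x) (e y)) {S : Set V} {S' : Set W}
    (hS' : ∀ x, x ∈ S' ↔ e x ∈ S) (x : W) :
    x ∈ nonIso B' S' ↔ e x ∈ nonIso B S := by
  constructor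
  · rintro ⟨h1, h2⟩
    exact ⟨(hS' x).1 h1, by rwa [← hB']⟩
  · rintro ⟨h1, h2⟩
    exact ⟨(hS' x).2 h1, by rwa [hB']⟩

theorem reflMap_of_equiv (hB' : ∀ x y, B' x y = B (e x) (e y)) (a x : W) :
    e (reflMap B' a x) = reflMap B (e a) (e x) := by
  rw [reflMap_apply, reflMap_apply, map_sub, map_smul, hB' a a, hB' x a]

theorem nullity_of_equiv (hB' : ∀ x y, B' x y = B (e x) (e y)) :
    nullity B' = nullity B := by
  have hker : LinearMap.ker B' = Submodule.comap (e : W →ₗ[ℝ] V) (LinearMap.ker B) := by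
    ext x
    rw [Submodule.mem_comap]
    exact mem_ker_iff_of_equiv B B' e hB' x
  rw [nullity, nullity, hker]
  exact LinearEquiv.finrank_eq (LinearEquiv.ofSubmodule' e (LinearMap.ker B))

theorem rank_of_equiv (hB' : ∀ x y, B' x y = B (e x) (e y)) :
    rank B' = rank B := by
  rw [rank, rank, nullity_of_equiv B B' e hB', e.finrank_eq]

theorem isConnSet_of_equiv (hB' : ∀ x y, B' x y = B (e x) (e y)) {S : Set V}
    (h : IsConnSet B S) {S' : Set W} (hS' : ∀ x, x ∈ S' ↔ e x ∈ S) :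
    IsConnSet B' S' := by
  rintro ⟨P₁, P₂, ⟨a, ha⟩, ⟨b, hb⟩, hun, hdis, horth⟩
  apply h
  refine ⟨e '' P₁, e '' P₂, ⟨e a, ⟨a, ha, rfl⟩⟩, ⟨e b, ⟨b, hb, rfl⟩⟩, ?_, ?_, ?_⟩
  · rw [← Set.image_union, hun]
    ext z
    constructor
    · rintro ⟨x, hx, rfl⟩
      exact (hS' x).1 hx
    · intro hz
      exact ⟨e.symm z, (hS' _).2 (by rwa [e.apply_symm_apply]), e.apply_symm_apply z⟩
  · rw [← Set.image_inter e.injective, hdis, Set.image_empty]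
  · rintro x ⟨x', hx', rfl⟩ y ⟨y', hy', rfl⟩
    rw [← hB']
    exact horth x' hx' y' hy'

theorem isSimplyLaced_of_equiv (hB' : ∀ x y, B' x y = B (e x) (e y)) {S : Set V}
    (h : IsSimplyLaced B S) {S' : Set W} (hS' : ∀ x, x ∈ S' ↔ e x ∈ S) :
    IsSimplyLaced B' S' := by
  intro a ha b hb
  rw [hB', hB']
  exact h (e a) ((nonIso_of_equiv B B' e hB' hS' a).1 ha)
    (e b) ((nonIso_of_equiv B B' e hB' hS' b).1 hb)

theorem isEARS_of_equiv (hB' : ∀ x y, B' x y = B (e x) (e y)) {S : Set V}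
    (h : IsEARS B S) {S' : Set W} (hS' : ∀ x, x ∈ S' ↔ e x ∈ S) :
    IsEARS B' S' := by
  have hnon := nonIso_of_equiv B B' e hB' hS'
  constructor
  · intro x y
    rw [hB', hB', h.symm]
  · intro x
    rw [hB']
    exact h.posSemidef _
  · -- lattice
    obtain ⟨s, hsind, hsspan, hscl⟩ := h.lattice
    refine ⟨⇑e.symm '' s, ?_, ?_, ?_⟩
    · have h1 : LinearIndependent ℝ (⇑e.symm.toLinearMap ∘ ((↑) : s → V)) :=
        hsind.map' e.symm.toLinearMap e.symm.ker
      exact (linearIndependent_equiv (Equiv.Set.image (⇑e.symm) s e.symm.injective)).1 h1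
    · rw [Submodule.span_image_linearEquiv, hsspan, Submodule.map_top]
      exact LinearMap.range_eq_top.mpr e.symm.surjective
    · have hS'img : S' = ⇑e.symm '' S := by
        ext x
        rw [hS' x]
        constructor
        · intro hx
          exact ⟨e x, hx, e.symm_apply_apply x⟩
        · rintro ⟨y, hy, rfl⟩
          rwa [e.apply_symm_apply]
      have himg : ∀ T : Set V, AddSubgroup.closure (⇑e.symm '' T)
          = AddSubgroup.map e.symm.toLinearMap.toAddMonoidHom (AddSubgroup.closure T) := by
        intro T
        rw [AddMonoidHom.map_closure]
        rfl
      rw [hS'img, himg, himg, hscl]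
  · intro a ha b hb
    obtain ⟨n, hn⟩ := h.integrality (e a) ((hnon a).1 ha) (e b) ((hnon b).1 hb)
    exact ⟨n, by rw [hB', hB']; exact hn⟩
  · intro a ha b hb
    rw [hS', reflMap_of_equiv B B' e hB']
    exact h.reflInvariant (e a) ((hnon a).1 ha) (e b) ((hS' b).1 hb)
  · ext x
    constructor
    · rintro ⟨h1, h2⟩
      have hx : e x ∈ S ∩ (LinearMap.ker B : Set V) :=
        ⟨(hS' x).1 h1, (mem_ker_iff_of_equiv B B' e hB' x).1 h2⟩
      rw [h.isoEq] at hx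
      obtain ⟨hk, hsub⟩ := hx
      obtain ⟨u, hu, v, hv, huv⟩ := Set.mem_sub.mp hsub
      refine ⟨h2, Set.mem_sub.mpr ⟨e.symm u, ?_, e.symm v, ?_, ?_⟩⟩
      · rw [hnon]; rwa [e.apply_symm_apply]
      · rw [hnon]; rwa [e.apply_symm_apply]
      · apply e.injective
        rw [map_sub, e.apply_symm_apply, e.apply_symm_apply, huv]
    · rintro ⟨h2, hsub⟩
      obtain ⟨u, hu, v, hv, huv⟩ := Set.mem_sub.mp hsub
      have hx : e x ∈ (LinearMap.ker B : Set V) ∩ (nonIso B S - nonIso B S) := by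
        refine ⟨(mem_ker_iff_of_equiv B B' e hB' x).1 h2,
          Set.mem_sub.mpr ⟨e u, (hnon u).1 hu, e v, (hnon v).1 hv, ?_⟩⟩
        rw [← map_sub, huv]
      rw [← h.isoEq] at hx
      exact ⟨(hS' x).2 hx.1, h2⟩
  · intro a ha h2
    apply h.notTwice (e a) ((hnon a).1 ha)
    have h3 := (hS' _).1 h2
    rwa [map_smul] at h3
  · exact isConnSet_of_equiv B B' e hB' h.conn hnon

end AuxTransport

/-- Any reflectable base of a reduced simply laced extended affine
root system of rank `ℓ > 1` and nullity `ν` contains a subset of cardinality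
`ℓ + ν` which is a reflectable base for a root subsystem of the same type,
rank and nullity. -/
theorem reflBase_contains_base_of_subsystem
    {V : Type*} [AddCommGroup V] [Module ℝ V] [FiniteDimensional ℝ V]
    (B : LinearMap.BilinForm ℝ V) (R : Set V) (hR : IsEARS B R) (hred : IsReduced B R)
    (hsl : IsSimplyLaced B R) (hrank : 1 < rank B)
    (Pi : Set V) (hPi : IsReflBase B R Pi) :
    ∃ Pi' ⊆ Pi, Pi'.encard = ((rank B + nullity B : ℕ) : ℕ∞) ∧
      IsEARS (restrictForm B (Submodule.span ℝ (earsOf B R Pi')))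
        (Subtype.val ⁻¹' earsOf B R Pi') ∧
      IsSimplyLaced (restrictForm B (Submodule.span ℝ (earsOf B R Pi')))
        (Subtype.val ⁻¹' earsOf B R Pi') ∧
      rank (restrictForm B (Submodule.span ℝ (earsOf B R Pi'))) = rank B ∧
      nullity (restrictForm B (Submodule.span ℝ (earsOf B R Pi'))) = nullity B ∧
      nonIso B (earsOf B R Pi') ⊆ nonIso B R ∧
      IsReflBase B (earsOf B R Pi') Pi' := by
  obtain ⟨⟨hPiSub, hPiOrb⟩, hPiMin⟩ := hPi
  have hsymm := hR.symm
  have hpos := hR.posSemidef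
  -- span of R is ⊤
  have hspanR : Submodule.span ℝ R = ⊤ := by
    obtain ⟨s, hsind, hsspan, hscl⟩ := hR.lattice
    have hs_sub : s ⊆ (Submodule.span ℝ R : Set V) := by
      intro x hx
      have hx1 : x ∈ AddSubgroup.closure R := hscl ▸ AddSubgroup.subset_closure hx
      have hle : AddSubgroup.closure R ≤ (Submodule.span ℝ R).toAddSubgroup :=
        (AddSubgroup.closure_le _).2 (fun y hy => Submodule.subset_span hy)
      exact hle hx1
    rw [← top_le_iff, ← hsspan]
    exact Submodule.span_le.2 hs_sub
  have hspanNon : Submodule.span ℝ (nonIso B R) = ⊤ := by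
    rw [← top_le_iff, ← hspanR]
    refine Submodule.span_le.2 ?_
    intro r hr
    rcases eq_or_ne (B r r) 0 with h | h
    · have hk : r ∈ R ∩ (LinearMap.ker B : Set V) :=
        ⟨hr, mem_ker_of_isotropic B hsymm hpos h⟩
      rw [hR.isoEq] at hk
      obtain ⟨-, hsub⟩ := hk
      obtain ⟨u, hu, v, hv, huv⟩ := Set.mem_sub.mp hsub
      rw [← huv]
      exact Submodule.sub_mem _ (Submodule.subset_span hu) (Submodule.subset_span hv)
    · exact Submodule.subset_span ⟨hr, h⟩
  have hspanPi : Submodule.span ℝ Pi = ⊤ := by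
    rw [← top_le_iff, ← hspanNon]
    refine Submodule.span_le.2 ?_
    rw [← hPiOrb]
    exact reflOrbit_subset_span B
  have hPiConn : IsConnSet B Pi := connSet_of_reflBase B R hR hPiSub hPiOrb
  -- Pi is nonempty
  have hPine : Pi.Nonempty := by
    by_contra h
    rw [Set.not_nonempty_iff_eq_empty] at h
    rw [h, Submodule.span_empty] at hspanPi
    have hfr : Module.finrank ℝ V = 0 := by
      rw [← finrank_top ℝ V, ← hspanPi, finrank_bot]
    have : rank B ≤ Module.finrank ℝ V := Nat.sub_le _ _
    omega
  obtain ⟨p₀, hp₀⟩ := hPine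
  have h0 : p₀ ≠ 0 := by
    intro h
    apply (hPiSub hp₀).2
    rw [h]
    simp
  obtain ⟨Pi', hPi'Pi, hind, hspan', hconn'⟩ :=
    exists_conn_basis B hsymm hPiConn hspanPi hp₀ h0
  -- basic facts about the orbit
  have hPi'non : Pi' ⊆ nonIso B R := fun x hx => hPiSub (hPi'Pi hx)
  have hOnon : reflOrbit B Pi' ⊆ nonIso B R := reflOrbit_subset_nonIso B R hR hPi'non
  have hOE : reflOrbit B Pi' ⊆ earsOf B R Pi' := Set.subset_union_left
  have hPi'O : Pi' ⊆ reflOrbit B Pi' := fun x hx => mem_reflOrbit_self B hx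
  have hnonE : nonIso B (earsOf B R Pi') = reflOrbit B Pi' := by
    ext x
    constructor
    · rintro ⟨hxE, hxne⟩
      rcases hxE with h | ⟨-, -, hk⟩
      · exact h
      · exact absurd (by rw [LinearMap.mem_ker.mp hk, LinearMap.zero_apply]) hxne
    · intro hx
      exact ⟨hOE hx, (hOnon hx).2⟩
  have hsubNon : nonIso B (earsOf B R Pi') ⊆ nonIso B R := by
    rw [hnonE]; exact hOnon
  have hspanE : Submodule.span ℝ (earsOf B R Pi') = ⊤ := by
    rw [← top_le_iff, ← hspan']
    exact Submodule.span_mono (subset_trans hPi'O hOE)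
  -- closure equality
  have hgood := reflOrbit_subset_goodLattice B R hR hPi'non
  have hclE : AddSubgroup.closure (earsOf B R Pi') = AddSubgroup.closure Pi' := by
    apply le_antisymm
    · rw [AddSubgroup.closure_le]
      rintro x (hO | ⟨hsub, -⟩)
      · exact (hgood hO).1
      · obtain ⟨u, hu, v, hv, huv⟩ := Set.mem_sub.mp hsub
        rw [← huv]
        exact sub_mem (hgood hu).1 (hgood hv).1
    · exact AddSubgroup.closure_mono (subset_trans hPi'O hOE)
  -- IsEARS of earsOf in V
  have hisoE : earsOf B R Pi' ∩ (LinearMap.ker B : Set V) =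
      (LinearMap.ker B : Set V) ∩
        (nonIso B (earsOf B R Pi') - nonIso B (earsOf B R Pi')) := by
    rw [hnonE]
    ext x
    constructor
    · rintro ⟨hxE, hxk⟩
      rcases hxE with hO | ⟨hsub, -⟩
      · exact absurd (by rw [LinearMap.mem_ker.mp hxk, LinearMap.zero_apply])
          ((hOnon hO).2)
      · exact ⟨hxk, hsub⟩
    · rintro ⟨hxk, hxsub⟩
      refine ⟨Or.inr ⟨hxsub, ?_, hxk⟩, hxk⟩
      have hx2 : x ∈ (LinearMap.ker B : Set V) ∩ (nonIso B R - nonIso B R) := by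
        obtain ⟨u, hu, v, hv, huv⟩ := Set.mem_sub.mp hxsub
        exact ⟨hxk, Set.mem_sub.mpr ⟨u, hOnon hu, v, hOnon hv, huv⟩⟩
      rw [← hR.isoEq] at hx2
      exact hx2.1
  have hreflE : ∀ a ∈ nonIso B (earsOf B R Pi'), ∀ b ∈ earsOf B R Pi',
      reflMap B a b ∈ earsOf B R Pi' := by
    intro a ha b hb
    rw [hnonE] at ha
    rcases hb with hbO | ⟨hbsub, hbR, hbk⟩
    · exact Or.inl (reflOrbit_reflClosed B hsymm ha hbO)
    · have hba : B b a = 0 := by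
        rw [LinearMap.mem_ker.mp hbk, LinearMap.zero_apply]
      have heq : reflMap B a b = b := by
        rw [reflMap_apply, hba]
        simp
      rw [heq]
      exact Or.inr ⟨hbsub, hbR, hbk⟩
  have hnt : ∀ a ∈ nonIso B (earsOf B R Pi'), (2 : ℝ) • a ∉ earsOf B R Pi' := by
    intro a ha h2
    rcases h2 with hO | ⟨-, -, hk⟩
    · exact hR.notTwice a (hsubNon ha) (hOnon hO).1
    · have h1 : (2 : ℝ) * B a a = 0 := by
        have h3 := LinearMap.congr_fun (LinearMap.mem_ker.mp hk) a
        simpa [map_smul] using h3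
      have h4 : B a a = 0 := by linarith
      exact ha.2 h4
  have hconnE : IsConnSet B (nonIso B (earsOf B R Pi')) := by
    rw [hnonE]
    exact reflOrbit_conn B hconn' hspan' (fun x hx => (hOnon hx).2)
  have hE : IsEARS B (earsOf B R Pi') :=
    ⟨hsymm, hpos, ⟨Pi', hind, hspan', hclE⟩,
      fun a ha b hb => hR.integrality a (hsubNon ha) b (hsubNon hb),
      hreflE, hisoE, hnt, hconnE⟩
  have hslE : IsSimplyLaced B (earsOf B R Pi') :=
    fun a ha b hb => hsl a (hsubNon ha) b (hsubNon hb)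
  -- reflectable base
  have hreflbase : IsReflBase B (earsOf B R Pi') Pi' := by
    refine ⟨⟨by rw [hnonE]; exact hPi'O, hnonE.symm⟩, ?_⟩
    intro Q hQ hne hQrefl
    obtain ⟨hQsub, hQorb⟩ := hQrefl
    have hnsub : ¬ Pi' ⊆ Q := fun h => hne (Set.Subset.antisymm hQ h)
    obtain ⟨q, hqPi', hqQ⟩ := Set.not_subset.mp hnsub
    have hq : q ∈ reflOrbit B Q := by
      rw [hQorb, hnonE]
      exact hPi'O hqPi'
    have hq2 : q ∈ Submodule.span ℝ Q := reflOrbit_subset_span B hq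
    have hx : (⟨q, hqPi'⟩ : ↥Pi') ∉ {i : ↥Pi' | (i : V) ≠ q} := by simp
    apply hind.notMem_span_image hx
    refine Submodule.span_mono ?_ hq2
    intro u hu
    exact ⟨⟨u, hQ hu⟩, fun h => hqQ (h ▸ hu), rfl⟩
  -- cardinality
  have hfinite : Finite ↥Pi' := hind.finite
  have hfin : Pi'.Finite := Set.toFinite Pi'
  haveI := hfin.fintype
  have hb : Module.Basis ↥Pi' ℝ V := Module.Basis.mk hind (by rw [Subtype.range_coe]; exact hspan'.ge)
  have hcard : Module.finrank ℝ V = Fintype.card ↥Pi' := Module.finrank_eq_card_basis hb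
  have hsum : rank B + nullity B = Module.finrank ℝ V := by
    have h1 : nullity B ≤ Module.finrank ℝ V := Submodule.finrank_le _
    have h2 : rank B = Module.finrank ℝ V - nullity B := rfl
    omega
  have hencard : Pi'.encard = ((rank B + nullity B : ℕ) : ℕ∞) := by
    rw [Set.encard_eq_coe_toFinset_card, Set.toFinset_card]
    exact congrArg _ (hcard.symm.trans hsum.symm)
  -- transport
  have hUtop : Submodule.span ℝ (earsOf B R Pi') = ⊤ := hspanE
  set U : Submodule ℝ V := Submodule.span ℝ (earsOf B R Pi') with hUdef
  let e : ↥U ≃ₗ[ℝ] V := LinearEquiv.ofTop U hUtop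
  have hB' : ∀ x y : ↥U, restrictForm B U x y = B (e x) (e y) := fun x y => rfl
  have hS' : ∀ x : ↥U, x ∈ (Subtype.val ⁻¹' earsOf B R Pi' : Set ↥U) ↔
      e x ∈ earsOf B R Pi' := fun x => Iff.rfl
  exact ⟨Pi', hPi'Pi, hencard,
    isEARS_of_equiv B (restrictForm B U) e hB' hE hS',
    isSimplyLaced_of_equiv B (restrictForm B U) e hB' hslE hS',
    rank_of_equiv B (restrictForm B U) e hB',
    nullity_of_equiv B (restrictForm B U) e hB',
    hsubNon, hreflbase⟩

end EARSPaper
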